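/- Let X be a topological space and I a homogeneous ideal on ω. Then (a) (X,I) has the BW property if and only if (X,I) has the hBW property, and (b) (X,I) has the FinBW property if and only if (X,I) has the hFinBW property. -/

import Mathlib

open Set Filter

/-- `I` is an ideal on the countable set `X`: closed under subsets and finite
unions, contains all finite sets, and does not contain the whole set. -/
def IsIdeal {X : Type*} (I : Set (Set X)) : Prop :=
  (∀ A B : Set X, A ∈ I → B ⊆ A → B ∈ I) ∧
  (∀ A B : Set X, A ∈ I → B ∈ I → A ∪ B ∈ I) ∧
  (∀ A : Set X, A.Finite → A ∈ I) ∧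
  (Set.univ : Set X) ∉ I

/-- The restriction `I|A = {B ∩ A : B ∈ I}`. -/
def restr {X : Type*} (I : Set (Set X)) (A : Set X) : Set (Set X) :=
  {C | ∃ B ∈ I, C = B ∩ A}

/-- `I|A ≅ I|B`: there is a bijection `f : B → A` such that for every
`C ⊆ A`, `C ∈ I|A ↔ f⁻¹[C] ∈ I|B`. -/
def RIso {X : Type*} (I : Set (Set X)) (A B : Set X) : Prop :=
  ∃ f : X → X, Set.BijOn f B A ∧
    ∀ C : Set X, C ⊆ A → (C ∈ restr I A ↔ B ∩ f ⁻¹' C ∈ restr I B)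

/-- The homogeneity family `H(I) = {A : I|A ≅ I}`. -/
def HF {X : Type*} (I : Set (Set X)) : Set (Set X) := {A | RIso I A Set.univ}

/-- `I` is homogeneous if `H(I) = I⁺`. -/
def HomogIdeal {X : Type*} (I : Set (Set X)) : Prop := HF I = {A | A ∉ I}

/-- `I` is anti-homogeneous if `H(I) = I*`. -/
def AntiHomogIdeal {X : Type*} (I : Set (Set X)) : Prop := HF I = {A | Aᶜ ∈ I}

/-- `I ≅ J`: a bijection `f` of underlying sets with `A ∈ I ↔ f⁻¹[A] ∈ J`. -/
def Isomorphic {X Y : Type*} (I : Set (Set X)) (J : Set (Set Y)) : Prop :=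
  ∃ f : Y → X, Function.Bijective f ∧ ∀ A : Set X, A ∈ I ↔ f ⁻¹' A ∈ J

/-- The ideal `Fin ⊕ P(ω)` on `{0,1} × ω` (here `Bool × ℕ`, `true` playing the
role of `1`): all sets `A` with `{n : (1,n) ∈ A}` finite. -/
def FinOplusAll : Set (Set (Bool × ℕ)) := {A | {n : ℕ | (true, n) ∈ A}.Finite}

/-- An ideal on `ω` is admissible if it is not isomorphic to `Fin ⊕ P(ω)`. -/
def Admissible (I : Set (Set ℕ)) : Prop := ¬ Isomorphic I FinOplusAll

/-- An injection `f` is bi-`I`-invariant if `f[A] ∈ I ↔ A ∈ I` for all `A`. -/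
def BiInvariant {X : Type*} (I : Set (Set X)) (f : X → X) : Prop :=
  Function.Injective f ∧ ∀ A : Set X, f '' A ∈ I ↔ A ∈ I

/-- The set of fixed points of `f`. -/
def fixedSet {X : Type*} (f : X → X) : Set X := {x | f x = x}

/-- `I` is a maximal ideal. -/
def MaximalIdeal {X : Type*} (I : Set (Set X)) : Prop :=
  IsIdeal I ∧ ∀ A : Set X, A ∈ I ∨ Aᶜ ∈ I

/-- The subsequence `(x_n)_{n ∈ A}` is `I`-convergent to `l`. -/
def IConvOn {X : Type*} [TopologicalSpace X] (I : Set (Set ℕ)) (A : Set ℕ)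
    (x : ℕ → X) (l : X) : Prop :=
  ∀ U : Set X, IsOpen U → l ∈ U → {n ∈ A | x n ∉ U} ∈ I

/-- The subsequence `(x_n)_{n ∈ A}` is convergent to `l` (classically). -/
def ConvOn {X : Type*} [TopologicalSpace X] (A : Set ℕ) (x : ℕ → X) (l : X) : Prop :=
  ∀ U : Set X, IsOpen U → l ∈ U → {n ∈ A | x n ∉ U}.Finite

def BW (X : Type*) [TopologicalSpace X] (I : Set (Set ℕ)) : Prop :=
  ∀ x : ℕ → X, ∃ A : Set ℕ, A ∉ I ∧ ∃ l : X, IConvOn I A x l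

def FinBW (X : Type*) [TopologicalSpace X] (I : Set (Set ℕ)) : Prop :=
  ∀ x : ℕ → X, ∃ A : Set ℕ, A ∉ I ∧ ∃ l : X, ConvOn A x l

def hBW (X : Type*) [TopologicalSpace X] (I : Set (Set ℕ)) : Prop :=
  ∀ A : Set ℕ, A ∉ I → ∀ x : ℕ → X,
    ∃ B : Set ℕ, B ⊆ A ∧ B ∉ I ∧ ∃ l : X, IConvOn I B x l

def hFinBW (X : Type*) [TopologicalSpace X] (I : Set (Set ℕ)) : Prop :=
  ∀ A : Set ℕ, A ∉ I → ∀ x : ℕ → X,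
    ∃ B : Set ℕ, B ⊆ A ∧ B ∉ I ∧ ∃ l : X, ConvOn B x l

/-!
A positive set `A` of a homogeneous ideal carries a copy of `I`: there is an injection
`f : ℕ → ℕ` onto `A` such that `C ⊆ A` is in `I` iff `f⁻¹[C]` is. Given `x` indexed by `A`,
apply the non-hereditary property to `x ∘ f` and push the resulting positive set `B` forward
along `f`; `f[B] ⊆ A` is positive, and `I`-convergence and convergence are carried along.
-/

lemma restr_univ {X : Type*} (I : Set (Set X)) : restr I univ = I := by
  ext C
  simp [restr]

lemma mem_restr_iff_of_subset {X : Type*} {I : Set (Set X)}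
    (hdown : ∀ A B : Set X, A ∈ I → B ⊆ A → B ∈ I) {A C : Set X} (hCA : C ⊆ A) :
    C ∈ restr I A ↔ C ∈ I := by
  constructor
  · rintro ⟨B, hB, rfl⟩
    exact hdown B _ hB inter_subset_left
  · exact fun hC => ⟨C, hC, (inter_eq_left.mpr hCA).symm⟩

section Transfer

variable {I : Set (Set ℕ)} {A : Set ℕ} {f : ℕ → ℕ}

lemma exists_injective_of_mem_HF (hdown : ∀ A B : Set ℕ, A ∈ I → B ⊆ A → B ∈ I)
    (hA : A ∈ HF I) :
    ∃ f : ℕ → ℕ, f.Injective ∧ range f = A ∧ ∀ C ⊆ A, (C ∈ I ↔ f ⁻¹' C ∈ I) := by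
  obtain ⟨f, hbij, hf⟩ := hA
  refine ⟨f, injOn_univ.1 hbij.injOn, image_univ ▸ hbij.image_eq, ?_⟩
  intro C hCA
  simpa only [mem_restr_iff_of_subset hdown hCA, univ_inter, restr_univ] using hf C hCA

variable (hf : ∀ C ⊆ A, (C ∈ I ↔ f ⁻¹' C ∈ I))
include hf

lemma image_notMem_of_reflect (hinj : f.Injective) (hrange : range f ⊆ A) {B : Set ℕ}
    (hB : B ∉ I) : f '' B ∉ I := by
  rwa [hf _ ((image_subset_range f B).trans hrange), hinj.preimage_image]

lemma IConvOn.image_of_reflect {X : Type*} [TopologicalSpace X] (hinj : f.Injective)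
    (hrange : range f ⊆ A) {B : Set ℕ} {x : ℕ → X} {l : X} (hconv : IConvOn I B (x ∘ f) l) :
    IConvOn I (f '' B) x l := by
  intro U hU hlU
  have hsub : {n ∈ f '' B | x n ∉ U} ⊆ A :=
    fun n hn => hrange (image_subset_range f B hn.1)
  have hpre : f ⁻¹' {n ∈ f '' B | x n ∉ U} = {m ∈ B | (x ∘ f) m ∉ U} := by
    ext m
    simp [hinj.eq_iff]
  rw [hf _ hsub, hpre]
  exact hconv U hU hlU

end Transfer

lemma ConvOn.image {X : Type*} [TopologicalSpace X] (f : ℕ → ℕ) {B : Set ℕ} {x : ℕ → X} {l : X}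
    (hconv : ConvOn B (x ∘ f) l) : ConvOn (f '' B) x l := by
  intro U hU hlU
  have himage : {n ∈ f '' B | x n ∉ U} = f '' {m ∈ B | (x ∘ f) m ∉ U} := by
    ext n
    constructor
    · rintro ⟨⟨m, hm, rfl⟩, hx⟩
      exact ⟨m, ⟨hm, hx⟩, rfl⟩
    · rintro ⟨m, ⟨hm, hx⟩, rfl⟩
      exact ⟨⟨m, hm, rfl⟩, hx⟩
  rw [himage]
  exact (hconv U hU hlU).image f

section Hereditary

variable (X : Type*) [TopologicalSpace X] {I : Set (Set ℕ)}

lemma BW_of_hBW (huniv : univ ∉ I) (h : hBW X I) : BW X I := fun x => by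
  obtain ⟨B, -, hB, l, hconv⟩ := h univ huniv x
  exact ⟨B, hB, l, hconv⟩

lemma FinBW_of_hFinBW (huniv : univ ∉ I) (h : hFinBW X I) : FinBW X I := fun x => by
  obtain ⟨B, -, hB, l, hconv⟩ := h univ huniv x
  exact ⟨B, hB, l, hconv⟩

variable (hdown : ∀ A B : Set ℕ, A ∈ I → B ⊆ A → B ∈ I) (hH : {A | A ∉ I} ⊆ HF I)
include hdown hH

lemma hBW_of_BW (h : BW X I) : hBW X I := by
  intro A hA x
  obtain ⟨f, hinj, hrange, hf⟩ := exists_injective_of_mem_HF hdown (hH hA)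
  obtain ⟨B, hB, l, hconv⟩ := h (x ∘ f)
  exact ⟨f '' B, hrange ▸ image_subset_range f B,
    image_notMem_of_reflect hf hinj hrange.le hB, l,
    hconv.image_of_reflect hf hinj hrange.le⟩

lemma hFinBW_of_FinBW (h : FinBW X I) : hFinBW X I := by
  intro A hA x
  obtain ⟨f, hinj, hrange, hf⟩ := exists_injective_of_mem_HF hdown (hH hA)
  obtain ⟨B, hB, l, hconv⟩ := h (x ∘ f)
  exact ⟨f '' B, hrange ▸ image_subset_range f B,
    image_notMem_of_reflect hf hinj hrange.le hB, l, hconv.image f⟩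

end Hereditary

/-- for a homogeneous ideal, BW ↔ hBW and FinBW ↔ hFinBW. -/
theorem stmt_8 (X : Type*) [TopologicalSpace X] (I : Set (Set ℕ))
    (hI : IsIdeal I) (hhom : HomogIdeal I) :
    (BW X I ↔ hBW X I) ∧ (FinBW X I ↔ hFinBW X I) := by
  have hH : {A | A ∉ I} ⊆ HF I := hhom.symm.le
  exact ⟨⟨hBW_of_BW X hI.1 hH, BW_of_hBW X hI.2.2.2⟩,
    ⟨hFinBW_of_FinBW X hI.1 hH, FinBW_of_hFinBW X hI.2.2.2⟩⟩
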